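/- The at-the-money vega of the Inverse-option Black–Scholes price admits the closed form: for all τ > 0, x ∈ ℝ and σ > 0, ∂_σ BS(τ,x,x,σ) = −στ e^{σ²τ} Erfc(3σ√τ/(2√2)) + e^{−σ²τ/8} √τ / √(2π). -/

import Mathlib

open Real MeasureTheory Set Filter

/-- Standard normal CDF `N(z) = (2π)^{-1/2} ∫_{-∞}^z e^{-t²/2} dt`. -/
noncomputable def Ncdf (z : ℝ) : ℝ :=
  (Real.sqrt (2 * Real.pi))⁻¹ * ∫ t in Set.Iic z, Real.exp (-t ^ 2 / 2)

/-- Standard normal density `φ(z) = (2π)^{-1/2} e^{-z²/2}`. -/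
noncomputable def phi (z : ℝ) : ℝ :=
  (Real.sqrt (2 * Real.pi))⁻¹ * Real.exp (-z ^ 2 / 2)

/-- `d₂ = (x-k)/(σ√τ) - σ√τ/2`. -/
noncomputable def d2 (τ x k σ : ℝ) : ℝ :=
  (x - k) / (σ * Real.sqrt τ) - σ * Real.sqrt τ / 2

/-- `d₁ = d₂ - σ√τ`. -/
noncomputable def d1 (τ x k σ : ℝ) : ℝ :=
  d2 τ x k σ - σ * Real.sqrt τ

/-- Black–Scholes price of an Inverse European call:
`BS(τ,x,k,σ) = N(d₂) - e^{σ²τ + k - x} N(d₁)`. -/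
noncomputable def BS (τ x k σ : ℝ) : ℝ :=
  Ncdf (d2 τ x k σ) - Real.exp (σ ^ 2 * τ + k - x) * Ncdf (d1 τ x k σ)

/-- Complementary error function `Erfc(z) = (2/√π) ∫_z^∞ e^{-t²} dt`. -/
noncomputable def Erfc (z : ℝ) : ℝ :=
  2 / Real.sqrt Real.pi * ∫ t in Set.Ioi z, Real.exp (-t ^ 2)

/-- `H(τ,x,k,σ) = ½ (∂³ₓₓₓ BS - ∂²ₓₓ BS)(τ,x,k,σ)`. -/
noncomputable def Hfun (τ x k σ : ℝ) : ℝ :=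
  (1 / 2) * (iteratedDeriv 3 (fun x' => BS τ x' k σ) x
    - iteratedDeriv 2 (fun x' => BS τ x' k σ) x)

/-- `G(τ,x,k,σ) = ∂ₖ H(τ,x,k,σ) - H(τ,x,k,σ)`. -/
noncomputable def Gfun (τ x k σ : ℝ) : ℝ :=
  deriv (fun k' => Hfun τ x k' σ) k - Hfun τ x k σ

lemma gauss_integrableOn (s : Set ℝ) : IntegrableOn (fun t : ℝ => Real.exp (-t ^ 2 / 2)) s := by
  have h := integrable_exp_neg_mul_sq (by norm_num : (0:ℝ) < 1/2)
  have : (fun t : ℝ => Real.exp (-t ^ 2 / 2)) = fun t : ℝ => Real.exp (-(1/2) * t ^ 2) := by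
    funext t; ring_nf
  rw [this]
  exact h.integrableOn

lemma Ncdf_hasDerivAt (z : ℝ) : HasDerivAt Ncdf (phi z) z := by
  have hc : Continuous fun t : ℝ => Real.exp (-t ^ 2 / 2) := by continuity
  have key : Ncdf = fun w => (Real.sqrt (2 * Real.pi))⁻¹ *
      ((∫ t in Set.Iic (0:ℝ), Real.exp (-t ^ 2 / 2)) + ∫ t in (0:ℝ)..w, Real.exp (-t ^ 2 / 2)) := by
    funext w
    rw [Ncdf, ← intervalIntegral.integral_Iic_sub_Iic (gauss_integrableOn _) (gauss_integrableOn _)]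
    ring
  rw [key]
  have h1 : HasDerivAt (fun w => ∫ t in (0:ℝ)..w, Real.exp (-t ^ 2 / 2))
      (Real.exp (-z ^ 2 / 2)) z := (hc.integral_hasStrictDerivAt 0 z).hasDerivAt
  have := ((h1.const_add (∫ t in Set.Iic (0:ℝ), Real.exp (-t ^ 2 / 2))).const_mul
    ((Real.sqrt (2 * Real.pi))⁻¹))
  simpa [phi] using this

lemma Ncdf_neg (z : ℝ) : Ncdf (-z) = (1/2) * Erfc (z / Real.sqrt 2) := by
  have h2 : (0:ℝ) < Real.sqrt 2 := Real.sqrt_pos.mpr (by norm_num)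
  have e1 : (∫ t in Set.Iic (-z), Real.exp (-t ^ 2 / 2)) = ∫ t in Set.Ioi z, Real.exp (-t ^ 2 / 2) := by
    have : (∫ t in Set.Iic (-z), Real.exp (-t ^ 2 / 2))
        = ∫ t in Set.Iic (-z), Real.exp (-(-t) ^ 2 / 2) := by simp
    rw [this, integral_comp_neg_Iic (-z) (fun t => Real.exp (-t ^ 2 / 2)), neg_neg]
  have e2 : (∫ t in Set.Ioi (z / Real.sqrt 2), Real.exp (-(Real.sqrt 2 * t) ^ 2 / 2))
      = (Real.sqrt 2)⁻¹ • ∫ t in Set.Ioi (Real.sqrt 2 * (z / Real.sqrt 2)), Real.exp (-t ^ 2 / 2) :=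
    integral_comp_mul_left_Ioi (fun t => Real.exp (-t ^ 2 / 2)) _ h2
  have hzz : Real.sqrt 2 * (z / Real.sqrt 2) = z := by field_simp
  rw [hzz] at e2
  have e3 : (fun t : ℝ => Real.exp (-(Real.sqrt 2 * t) ^ 2 / 2)) = fun t : ℝ => Real.exp (-t ^ 2) := by
    funext t
    have : (Real.sqrt 2 * t) ^ 2 = 2 * t ^ 2 := by
      rw [mul_pow, Real.sq_sqrt (by norm_num : (2:ℝ) ≥ 0)]
    rw [this]; ring_nf
  rw [e3] at e2
  have e4 : (∫ t in Set.Ioi z, Real.exp (-t ^ 2 / 2))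
      = Real.sqrt 2 * ∫ t in Set.Ioi (z / Real.sqrt 2), Real.exp (-t ^ 2) := by
    rw [e2, smul_eq_mul, ← mul_assoc, mul_inv_cancel₀ h2.ne', one_mul]
  rw [Ncdf, Erfc, e1, e4]
  have hs : Real.sqrt (2 * Real.pi) = Real.sqrt 2 * Real.sqrt Real.pi :=
    Real.sqrt_mul (by norm_num) _
  have hπ : (0:ℝ) < Real.sqrt Real.pi := Real.sqrt_pos.mpr Real.pi_pos
  rw [hs]
  field_simp


/-- closed form of the at-the-money vega of the Inverse call. -/
theorem stmt_9 (τ x σ : ℝ) (hτ : 0 < τ) (hσ : 0 < σ) :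
    deriv (fun σ' => BS τ x x σ') σ
      = -(σ * τ) * Real.exp (σ ^ 2 * τ) * Erfc (3 * σ * Real.sqrt τ / (2 * Real.sqrt 2))
        + Real.exp (-(σ ^ 2 * τ) / 8) * Real.sqrt τ / Real.sqrt (2 * Real.pi) := by
  have hs : 0 < Real.sqrt τ := Real.sqrt_pos.mpr hτ
  set s := Real.sqrt τ with hsdef
  have hs2 : s ^ 2 = τ := Real.sq_sqrt hτ.le
  have hfun : (fun σ' => BS τ x x σ') = fun σ' =>
      Ncdf (-(σ' * s / 2)) - Real.exp (σ' ^ 2 * τ) * Ncdf (-(σ' * s / 2) - σ' * s) := by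
    funext σ'
    simp only [BS, d2, d1, sub_self, zero_div, zero_sub, ← hsdef]
    rw [show σ' ^ 2 * τ + x - x = σ' ^ 2 * τ by ring]
  have hA : HasDerivAt (fun σ' : ℝ => -(σ' * s / 2)) (-(s / 2)) σ := by
    have : (fun σ' : ℝ => -(σ' * s / 2)) = fun σ' => σ' * (-(s / 2)) := by funext t; ring
    rw [this]; simpa using (hasDerivAt_id σ).mul_const (-(s / 2))
  have hB : HasDerivAt (fun σ' : ℝ => -(σ' * s / 2) - σ' * s) (-(3 * s / 2)) σ := by
    have : (fun σ' : ℝ => -(σ' * s / 2) - σ' * s) = fun σ' => σ' * (-(3 * s / 2)) := by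
      funext t; ring
    rw [this]; simpa using (hasDerivAt_id σ).mul_const (-(3 * s / 2))
  have hN1 : HasDerivAt (fun σ' : ℝ => Ncdf (-(σ' * s / 2)))
      (phi (-(σ * s / 2)) * (-(s / 2))) σ := (Ncdf_hasDerivAt _).comp σ hA
  have hN2 : HasDerivAt (fun σ' : ℝ => Ncdf (-(σ' * s / 2) - σ' * s))
      (phi (-(σ * s / 2) - σ * s) * (-(3 * s / 2))) σ := (Ncdf_hasDerivAt _).comp σ hB
  have hp : HasDerivAt (fun σ' : ℝ => σ' ^ 2 * τ) (2 * σ * τ) σ := by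
    have := (hasDerivAt_pow 2 σ).mul_const τ
    simpa [pow_one] using this
  have hE : HasDerivAt (fun σ' : ℝ => Real.exp (σ' ^ 2 * τ))
      (Real.exp (σ ^ 2 * τ) * (2 * σ * τ)) σ := (Real.hasDerivAt_exp _).comp σ hp
  have key : HasDerivAt (fun σ' : ℝ => Ncdf (-(σ' * s / 2)) - Real.exp (σ' ^ 2 * τ) * Ncdf (-(σ' * s / 2) - σ' * s)) _ σ := hN1.sub (hE.mul hN2)
  rw [hfun, key.deriv]
  rw [show -(σ * s / 2) - σ * s = -(3 * σ * s / 2) by ring]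
  rw [Ncdf_neg (3 * σ * s / 2)]
  rw [show 3 * σ * s / 2 / Real.sqrt 2 = 3 * σ * s / (2 * Real.sqrt 2) by
    rw [div_div]]
  simp only [phi]
  rw [show -(-(σ * s / 2)) ^ 2 / 2 = -(σ ^ 2 * τ) / 8 by rw [← hs2]; ring]
  rw [show -(-(3 * σ * s / 2)) ^ 2 / 2 = -(σ ^ 2 * τ) / 8 + -(σ ^ 2 * τ) by
    rw [← hs2]; ring]
  rw [Real.exp_add, Real.exp_neg]
  have hexp : Real.exp (σ ^ 2 * τ) ≠ 0 := (Real.exp_pos _).ne'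
  have h2π : Real.sqrt (2 * Real.pi) ≠ 0 :=
    (Real.sqrt_pos.mpr (by positivity)).ne'
  field_simp
  ring
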